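/- Consider the planar ODE system (PX): da/dt = a(a+1)(a+c−1)·φ₃, dc/dt = −c(1−c)(a+c+1)·φ₁, where φ₁ = −3a²+1+c²−2c−2ac−2a and φ₃ = −3c²+a²+1+2c−2ac+2a. In the closed region {(a,c) ∈ ℝ² : a ≥ 0, 0 ≤ c ≤ 1}, the right-hand side of (PX) vanishes exactly at the three points (0,0), (1,0), and (0,1). Moreover, the Jacobian matrix of the right-hand side at (0,0) is minus the identity matrix, at (1,0) it is the matrix with rows (8, 8) and (0, 8), and at (0,1) it is the zero matrix. -/

import Mathlib

open Real Filter Set Topology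

/-- `φ₁ = -3a² + 1 + c² - 2c - 2ac - 2a`. -/
noncomputable def phi1 (a c : ℝ) : ℝ :=
  -3 * a ^ 2 + 1 + c ^ 2 - 2 * c - 2 * a * c - 2 * a

/-- `φ₃ = -3c² + a² + 1 + 2c - 2ac + 2a`. -/
noncomputable def phi3 (a c : ℝ) : ℝ :=
  -3 * c ^ 2 + a ^ 2 + 1 + 2 * c - 2 * a * c + 2 * a

/-- The right-hand side of the planar ODE system (PX):
`da/dt = a(a+1)(a+c-1)φ₃`, `dc/dt = -c(1-c)(a+c+1)φ₁`. -/
noncomputable def PX (p : ℝ × ℝ) : ℝ × ℝ :=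
  (p.1 * (p.1 + 1) * (p.1 + p.2 - 1) * phi3 p.1 p.2,
    -(p.2 * (1 - p.2) * (p.1 + p.2 + 1)) * phi1 p.1 p.2)

/-!
The second component of `PX` vanishes on the region only where `c = 0`, `c = 1` or `φ₁ = 0`,
the first only where `a = 0`, `a + c = 1` or `φ₃ = 0`. Each of the nine combinations is settled
by restricting `φ₁` or `φ₃` to the relevant line, where it becomes a square or a linear function,
together with the factorisation `φ₃ - φ₁ = 4(a + c)(a - c + 1)`.
-/

lemma phi1_zero_left (c : ℝ) : phi1 0 c = (1 - c) ^ 2 := by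
  unfold phi1; ring

lemma phi1_of_add_eq_one {a c : ℝ} (h : a + c = 1) : phi1 a c = 4 * (c - 1) := by
  obtain rfl : a = 1 - c := by linarith
  unfold phi1; ring

lemma phi3_zero_right (a : ℝ) : phi3 a 0 = (a + 1) ^ 2 := by
  unfold phi3; ring

lemma phi3_one_right (a : ℝ) : phi3 a 1 = a ^ 2 := by
  unfold phi3; ring

lemma phi3_sub_phi1 (a c : ℝ) : phi3 a c - phi1 a c = 4 * (a + c) * (a - c + 1) := by
  unfold phi1 phi3; ring

lemma PX_eq_zero_iff_of_nonneg {a c : ℝ} (ha : 0 ≤ a) (hc : 0 ≤ c) :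
    PX (a, c) = 0 ↔
      (a = 0 ∨ a + c = 1 ∨ phi3 a c = 0) ∧ (c = 0 ∨ c = 1 ∨ phi1 a c = 0) := by
  have ha1 : a + 1 ≠ 0 := by positivity
  have hac1 : a + c + 1 ≠ 0 := by positivity
  simp only [PX, Prod.mk_eq_zero, mul_eq_zero, neg_eq_zero, ha1, hac1, sub_eq_zero, or_false,
    or_assoc]
  grind

lemma PX_eq_zero_iff {a c : ℝ} (ha : 0 ≤ a) (hc₀ : 0 ≤ c) (hc₁ : c ≤ 1) :
    PX (a, c) = 0 ↔ (a, c) = (0, 0) ∨ (a, c) = (1, 0) ∨ (a, c) = (0, 1) := by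
  simp only [PX_eq_zero_iff_of_nonneg ha hc₀, Prod.mk.injEq]
  constructor
  · rintro ⟨rfl | hsum | h₃, rfl | rfl | h₁⟩
    · simp
    · simp
    · rw [phi1_zero_left, sq_eq_zero_iff, sub_eq_zero] at h₁
      simp [← h₁]
    · simp [show a = 1 by linarith]
    · simp [show a = 0 by linarith]
    · rw [phi1_of_add_eq_one hsum] at h₁
      have hc : c = 1 := by linarith
      simp [hc, show a = 0 by linarith]
    · rw [phi3_zero_right] at h₃
      nlinarith
    · rw [phi3_one_right, sq_eq_zero_iff] at h₃
      simp [h₃]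
    · have h : (a + c) * (a - c + 1) = 0 := by
        linear_combination (h₃ - h₁ - phi3_sub_phi1 a c) / 4
      rcases mul_eq_zero.mp h with h | h
      · left; constructor <;> linarith
      · right; right; constructor <;> linarith
  · rintro (⟨rfl, rfl⟩ | ⟨rfl, rfl⟩ | ⟨rfl, rfl⟩) <;> norm_num

/-- Each entry is the product rule `∂u · φ + u · ∂φ` applied to a component `u · φ` of `PX`. -/
noncomputable def jacobianPX (a c : ℝ) : Matrix (Fin 2) (Fin 2) ℝ :=
  !![((a + 1) * (a + c - 1) + a * (a + c - 1) + a * (a + 1)) * phi3 a c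
        + a * (a + 1) * (a + c - 1) * (2 * a - 2 * c + 2),
      a * (a + 1) * phi3 a c + a * (a + 1) * (a + c - 1) * (2 - 6 * c - 2 * a);
    -(c * (1 - c)) * phi1 a c - c * (1 - c) * (a + c + 1) * (-6 * a - 2 * c - 2),
      -((1 - c) * (a + c + 1) - c * (a + c + 1) + c * (1 - c)) * phi1 a c
        - c * (1 - c) * (a + c + 1) * (2 * c - 2 - 2 * a)]

lemma fderiv_PX_apply (p v : ℝ × ℝ) :
    fderiv ℝ PX p v =
      (jacobianPX p.1 p.2 0 0 * v.1 + jacobianPX p.1 p.2 0 1 * v.2,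
        jacobianPX p.1 p.2 1 0 * v.1 + jacobianPX p.1 p.2 1 1 * v.2) := by
  have ha : HasFDerivAt (fun q : ℝ × ℝ => q.1) (ContinuousLinearMap.fst ℝ ℝ ℝ) p :=
    hasFDerivAt_fst
  have hc : HasFDerivAt (fun q : ℝ × ℝ => q.2) (ContinuousLinearMap.snd ℝ ℝ ℝ) p :=
    hasFDerivAt_snd
  have hphi3 := ((((((hc.mul hc).const_mul (-3)).add (ha.mul ha)).add_const 1).add
      (hc.const_mul 2)).sub ((ha.const_mul 2).mul hc)).add (ha.const_mul 2)
  have hphi1 := ((((((ha.mul ha).const_mul (-3)).add_const 1).add (hc.mul hc)).sub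
      (hc.const_mul 2)).sub ((ha.const_mul 2).mul hc)).sub (ha.const_mul 2)
  have hfst := ((ha.mul (ha.add_const 1)).mul ((ha.add hc).sub_const 1)).mul hphi3
  have hsnd := (((hc.mul (hc.const_sub 1)).mul ((ha.add hc).add_const 1)).neg).mul hphi1
  have h : HasFDerivAt PX _ p := (hfst.prodMk hsnd).congr_of_eventuallyEq
    (.of_forall fun q => by
      simp only [PX, phi1, phi3, Prod.mk.injEq, Pi.mul_apply, Pi.add_apply, Pi.sub_apply,
        Pi.neg_apply]
      constructor <;> ring)
  rw [h.fderiv]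
  simp only [jacobianPX, phi1, phi3, Matrix.of_apply, Matrix.cons_val', Matrix.cons_val_zero,
    Matrix.cons_val_one, Matrix.cons_val_fin_one, ContinuousLinearMap.prod_apply, add_apply,
    sub_apply, neg_apply, smul_apply, ContinuousLinearMap.coe_fst', ContinuousLinearMap.coe_snd',
    Pi.add_apply, Pi.mul_apply, Pi.sub_apply, Pi.neg_apply, smul_eq_mul, Prod.mk.injEq]
  constructor <;> ring

lemma jacobianPX_zero_zero : jacobianPX 0 0 = -1 := by
  ext i j; fin_cases i <;> fin_cases j <;> norm_num [jacobianPX, phi1, phi3]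

lemma jacobianPX_one_zero : jacobianPX 1 0 = !![8, 8; 0, 8] := by
  ext i j; fin_cases i <;> fin_cases j <;> norm_num [jacobianPX, phi1, phi3]

lemma jacobianPX_zero_one : jacobianPX 0 1 = 0 := by
  ext i j; fin_cases i <;> fin_cases j <;> norm_num [jacobianPX, phi1, phi3]

/-- In the closed region `{a ≥ 0, 0 ≤ c ≤ 1}`, the equilibria of the planar system (PX) are
exactly `(0,0)`, `(1,0)` and `(0,1)`; the Jacobian of the right-hand side is minus the
identity at `(0,0)`, has rows `(8,8)` and `(0,8)` at `(1,0)`, and vanishes at `(0,1)`. -/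
theorem xcf_planar_equilibria :
    (∀ p : ℝ × ℝ, 0 ≤ p.1 → 0 ≤ p.2 → p.2 ≤ 1 →
      (PX p = 0 ↔ p = (0, 0) ∨ p = (1, 0) ∨ p = (0, 1))) ∧
    (∀ v : ℝ × ℝ, fderiv ℝ PX (0, 0) v = (-v.1, -v.2)) ∧
    (∀ v : ℝ × ℝ, fderiv ℝ PX (1, 0) v = (8 * v.1 + 8 * v.2, 8 * v.2)) ∧
    fderiv ℝ PX (0, 1) = 0 := by
  refine ⟨fun ⟨a, c⟩ => PX_eq_zero_iff, fun v => ?_, fun v => ?_, ?_⟩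
  · rw [fderiv_PX_apply, jacobianPX_zero_zero]
    simp
  · rw [fderiv_PX_apply, jacobianPX_one_zero]
    simp
  · ext <;> simp [fderiv_PX_apply, jacobianPX_zero_one]
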